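/- Let H be a nonempty set of NE approximators, let S = (u^{(1)},…,u^{(m)}) ∈ U^m be a fixed sample of m ≥ 1 game utilities, let r > 0, and suppose C is a nonempty finite set of NE approximators of cardinality K that r-covers H. Then the empirical Rademacher complexity of the Nash approximation loss class satisfies R_S(NashApr ∘ H) ≤ √(2·ln K / m) + 2r, where R_S(NashApr ∘ H) = (1/m)·E_{x}[ sup_{h∈H} Σ_{j=1}^m x_j · NashApr(h(u^{(j)}), u^{(j)}) ] and x = (x_1,…,x_m) is drawn uniformly from {−1,+1}^m. -/

import Mathlib

open Finset MeasureTheory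

section NashDefs

variable {N : Type*} {A : N → Type*}

/-- `σ` is a mixed strategy profile: each `σ i` is a probability distribution on `A i`. -/
def IsMixedProfile [∀ i, Fintype (A i)] (σ : ∀ i, A i → ℝ) : Prop :=
  (∀ i a, 0 ≤ σ i a) ∧ ∀ i, ∑ a, σ i a = 1

/-- Expected utility of player `i` when the mixed strategy profile `σ` is played:
`u_i(σ) = ∑_{a ∈ A} (∏_j σ_j(a_j)) u_i(a)`. -/
def expUtil [Fintype N] [DecidableEq N] [∀ i, Fintype (A i)]
    (u : N → (∀ j, A j) → ℝ) (i : N) (σ : ∀ j, A j → ℝ) : ℝ :=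
  ∑ a : ∀ j, A j, (∏ j, σ j (a j)) * u i a

/-- The pure strategy of player `i` playing action `b` with probability one. -/
def pureStrat [∀ i, DecidableEq (A i)] {i : N} (b : A i) : A i → ℝ :=
  fun c => if c = b then 1 else 0

/-- Nash approximation loss:
`NashApr(σ, u) = max_{i ∈ N} max_{b ∈ A_i} [u_i(b, σ_{-i}) - u_i(σ)]`. -/
noncomputable def nashApr [Fintype N] [DecidableEq N] [Nonempty N]
    [∀ i, Fintype (A i)] [∀ i, DecidableEq (A i)] [∀ i, Nonempty (A i)]
    (σ : ∀ i, A i → ℝ) (u : N → (∀ j, A j) → ℝ) : ℝ :=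
  Finset.univ.sup' Finset.univ_nonempty fun i : N =>
    Finset.univ.sup' Finset.univ_nonempty fun b : A i =>
      expUtil u i (Function.update σ i (pureStrat b)) - expUtil u i σ

/-- ℓ1-distance between mixed strategy profiles:
`‖σ - σ'‖₁ = ∑_{i ∈ N} ∑_{a_i ∈ A_i} |σ_i(a_i) - σ'_i(a_i)|`. -/
def dist1 [Fintype N] [∀ i, Fintype (A i)] (σ σ' : ∀ i, A i → ℝ) : ℝ :=
  ∑ i, ∑ a, |σ i a - σ' i a|

/-- ℓmax-distance between game utilities:
`‖u - v‖max = max_{i ∈ N} max_{a ∈ A} |u_i(a) - v_i(a)|`. -/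
noncomputable def distMax [Fintype N] [DecidableEq N] [Nonempty N]
    [∀ i, Fintype (A i)] [∀ i, Nonempty (A i)]
    (u v : N → (∀ j, A j) → ℝ) : ℝ :=
  Finset.univ.sup' Finset.univ_nonempty fun i : N =>
    Finset.univ.sup' Finset.univ_nonempty fun a : ∀ j, A j => |u i a - v i a|

end NashDefs

/-- The set of all game utilities (with values in `[0,1]`) for fixed players `N`
and action space `A`, as a subtype. -/
abbrev GameUtil (N : Type*) (A : N → Type*) : Type _ :=
  {u : N → (∀ j, A j) → ℝ // ∀ i a, u i a ∈ Set.Icc (0 : ℝ) 1}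

/-- An NE approximator maps game utilities to mixed strategy profiles. -/
abbrev NEApprox (N : Type*) (A : N → Type*) [∀ i, Fintype (A i)] : Type _ :=
  {h : GameUtil N A → ∀ i, A i → ℝ // ∀ u, IsMixedProfile (h u)}

section Risk

variable {N : Type*} {A : N → Type*} [Fintype N] [DecidableEq N] [Nonempty N]
  [∀ i, Fintype (A i)] [∀ i, DecidableEq (A i)] [∀ i, Nonempty (A i)]

/-- Nash approximation loss of an NE approximator on a game. -/
noncomputable def nashLoss (h : NEApprox N A) (u : GameUtil N A) : ℝ :=
  nashApr (h.1 u) u.1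

/-- True risk `L_D(h) = E_{u ∼ D}[NashApr(h(u), u)]`. -/
noncomputable def trueRisk (D : Measure (GameUtil N A)) (h : NEApprox N A) : ℝ :=
  ∫ u, nashLoss h u ∂D

/-- Empirical risk `L_S(h) = (1/m) ∑_j NashApr(h(u⁽ʲ⁾), u⁽ʲ⁾)`. -/
noncomputable def empRisk {m : ℕ} (S : Fin m → GameUtil N A) (h : NEApprox N A) : ℝ :=
  (1 / (m : ℝ)) * ∑ j, nashLoss h (S j)

/-- `C` `r`-covers `H` under the `ℓ_{∞,1}`-distance:
every `h ∈ H` is within `ℓ_{∞,1}`-distance `r` of some `g ∈ C`. -/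
def Covers (r : ℝ) (C : Finset (NEApprox N A)) (H : Set (NEApprox N A)) : Prop :=
  ∀ h ∈ H, ∃ g ∈ C, ∀ u, dist1 (h.1 u) (g.1 u) ≤ r

end Risk

/-- Empirical Rademacher complexity of the class `{u ↦ NashApr(h(u), u) : h ∈ H}`
on the sample `S`, with the Rademacher vector drawn uniformly from `{-1,+1}^m`. -/
noncomputable def radComplexity
    {N : Type*} [Fintype N] [DecidableEq N] [Nonempty N]
    {A : N → Type*} [∀ i, Fintype (A i)] [∀ i, DecidableEq (A i)] [∀ i, Nonempty (A i)]
    {m : ℕ} (H : Set (NEApprox N A)) (S : Fin m → GameUtil N A) : ℝ :=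
  (1 / (m : ℝ)) * ((1 / (2 : ℝ) ^ m) * ∑ x : Fin m → Bool,
    sSup ((fun h : NEApprox N A =>
      ∑ j, (if x j then (1 : ℝ) else -1) * nashLoss h (S j)) '' H))

/-!
Each loss `u ↦ NashApr(h(u), u)` is `2`-Lipschitz in `h(u)` for the ℓ1-distance, because an
expected utility under a product distribution moves by at most the ℓ1-distance of the marginals.
Hence replacing `h ∈ H` by an `r`-close `g ∈ C` changes every Rademacher sum by at most `2rm`,
and what is left is the finite class `C`. For it, Massart's argument applies: by Jensen,
`exp (t · 𝔼 max) ≤ ∑_{g ∈ C} 𝔼 exp (t ∑ⱼ xⱼ ℓ_g(j)) ≤ K exp (t² m / 2)` by Hoeffding's lemma, and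
optimising over `t > 0` gives `𝔼 max ≤ √(2 m log K)`.
-/

section Game

variable {N : Type*} {A : N → Type*}

theorem dist1_comm [Fintype N] [∀ i, Fintype (A i)] (σ σ' : ∀ j, A j → ℝ) :
    dist1 σ σ' = dist1 σ' σ := by
  simp only [dist1, abs_sub_comm]

variable [DecidableEq N]

theorem prod_update_apply [Fintype N] (σ : ∀ j, A j → ℝ) (i : N) (p : A i → ℝ) (a : ∀ j, A j) :
    ∏ j, Function.update σ i p j (a j) = p (a i) * ∏ j ∈ {i}ᶜ, σ j (a j) := by
  rw [Fintype.prod_eq_mul_prod_compl i, Function.update_self]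
  congr 1
  exact prod_congr rfl fun j hj => by rw [Function.update_of_ne (by simpa using hj)]

variable [∀ i, Fintype (A i)]

theorem IsMixedProfile.piecewise {σ σ' : ∀ j, A j → ℝ} (hσ : IsMixedProfile σ)
    (hσ' : IsMixedProfile σ') (s : Finset N) : IsMixedProfile (s.piecewise σ σ') := by
  refine ⟨fun j a => ?_, fun j => ?_⟩ <;> by_cases hj : j ∈ s <;> simp [hj, hσ.1, hσ'.1, hσ.2, hσ'.2]

theorem IsMixedProfile.update_pureStrat [∀ i, DecidableEq (A i)] {σ : ∀ j, A j → ℝ}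
    (hσ : IsMixedProfile σ) {i : N} (b : A i) :
    IsMixedProfile (Function.update σ i (pureStrat b)) := by
  refine ⟨fun j c => ?_, fun j => ?_⟩ <;> rcases eq_or_ne j i with rfl | hj
  · simp only [Function.update_self, pureStrat]; split_ifs <;> norm_num
  · simpa [Function.update_of_ne hj] using hσ.1 j c
  · simp [pureStrat]
  · simpa [Function.update_of_ne hj] using hσ.2 j

variable [Fintype N]

theorem IsMixedProfile.sum_prod_eq_one {σ : ∀ j, A j → ℝ} (hσ : IsMixedProfile σ) :
    ∑ a : ∀ j, A j, ∏ j, σ j (a j) = 1 := by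
  rw [← Fintype.prod_sum]
  exact prod_eq_one fun j _ => hσ.2 j

theorem sum_abs_prod_update_sub_prod {τ : ∀ j, A j → ℝ} (hτ : IsMixedProfile τ) (i : N)
    (p : A i → ℝ) :
    ∑ a : ∀ j, A j, |∏ j, Function.update τ i p j (a j) - ∏ j, τ j (a j)| =
      ∑ b, |p b - τ i b| := by
  have hdiff : ∀ a : ∀ j, A j, |∏ j, Function.update τ i p j (a j) - ∏ j, τ j (a j)| =
      ∏ j, Function.update τ i (fun b => |p b - τ i b|) j (a j) := fun a => by
    rw [prod_update_apply, prod_update_apply, Fintype.prod_eq_mul_prod_compl i, ← sub_mul,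
      abs_mul, abs_of_nonneg (prod_nonneg fun j _ => hτ.1 j (a j))]
  simp only [hdiff, ← Fintype.prod_sum]
  rw [Fintype.prod_eq_mul_prod_compl i, Function.update_self,
    prod_eq_one fun j hj => by rw [Function.update_of_ne (by simpa using hj)]; exact hτ.2 j,
    mul_one]

/-- Hybrid argument: switch the factors from `σ'` to `σ` one player at a time. -/
theorem sum_abs_prod_sub_prod_le_dist1 {σ σ' : ∀ j, A j → ℝ} (hσ : IsMixedProfile σ)
    (hσ' : IsMixedProfile σ') :
    ∑ a : ∀ j, A j, |∏ j, σ j (a j) - ∏ j, σ' j (a j)| ≤ dist1 σ σ' := by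
  suffices key : ∀ s : Finset N, ∑ a : ∀ j, A j,
      |∏ j, s.piecewise σ σ' j (a j) - ∏ j, σ' j (a j)| ≤ ∑ i ∈ s, ∑ b, |σ i b - σ' i b| by
    simpa [dist1] using key univ
  intro s
  induction s using Finset.induction_on with
  | empty => simp
  | insert i s hi ih =>
    calc ∑ a : ∀ j, A j, |∏ j, (insert i s).piecewise σ σ' j (a j) - ∏ j, σ' j (a j)|
        ≤ ∑ a : ∀ j, A j, (|∏ j, Function.update (s.piecewise σ σ') i (σ i) j (a j) -
            ∏ j, s.piecewise σ σ' j (a j)| + |∏ j, s.piecewise σ σ' j (a j) - ∏ j, σ' j (a j)|) :=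
          sum_le_sum fun a _ => by rw [piecewise_insert]; exact abs_sub_le _ _ _
      _ ≤ ∑ b, |σ i b - σ' i b| + ∑ i ∈ s, ∑ b, |σ i b - σ' i b| := by
          rw [sum_add_distrib, sum_abs_prod_update_sub_prod (hσ.piecewise hσ' s),
            piecewise_eq_of_notMem _ _ _ hi]
          gcongr
      _ = ∑ i ∈ insert i s, ∑ b, |σ i b - σ' i b| := by rw [sum_insert hi]

theorem dist1_update_le (σ σ' : ∀ j, A j → ℝ) (i : N) (p : A i → ℝ) :
    dist1 (Function.update σ i p) (Function.update σ' i p) ≤ dist1 σ σ' := by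
  refine sum_le_sum fun j _ => ?_
  rcases eq_or_ne j i with rfl | hj
  · simpa using sum_nonneg fun a _ => abs_nonneg (σ j a - σ' j a)
  · simp [Function.update_of_ne hj]

theorem expUtil_nonneg {u : N → (∀ j, A j) → ℝ} {i : N} (hu : ∀ a, 0 ≤ u i a)
    {σ : ∀ j, A j → ℝ} (hσ : IsMixedProfile σ) : 0 ≤ expUtil u i σ :=
  sum_nonneg fun a _ => mul_nonneg (prod_nonneg fun j _ => hσ.1 j (a j)) (hu a)

theorem expUtil_le_one {u : N → (∀ j, A j) → ℝ} {i : N} (hu : ∀ a, u i a ≤ 1)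
    {σ : ∀ j, A j → ℝ} (hσ : IsMixedProfile σ) : expUtil u i σ ≤ 1 :=
  calc expUtil u i σ ≤ ∑ a : ∀ j, A j, ∏ j, σ j (a j) :=
        sum_le_sum fun a _ => mul_le_of_le_one_right (prod_nonneg fun j _ => hσ.1 j (a j)) (hu a)
    _ = 1 := hσ.sum_prod_eq_one

theorem abs_expUtil_sub_le_dist1 {u : N → (∀ j, A j) → ℝ} {i : N} (hu : ∀ a, |u i a| ≤ 1)
    {σ σ' : ∀ j, A j → ℝ} (hσ : IsMixedProfile σ) (hσ' : IsMixedProfile σ') :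
    |expUtil u i σ - expUtil u i σ'| ≤ dist1 σ σ' :=
  calc |expUtil u i σ - expUtil u i σ'|
      = |∑ a : ∀ j, A j, (∏ j, σ j (a j) - ∏ j, σ' j (a j)) * u i a| := by
        simp only [expUtil, ← sum_sub_distrib, sub_mul]
    _ ≤ ∑ a : ∀ j, A j, |∏ j, σ j (a j) - ∏ j, σ' j (a j)| * |u i a| :=
        (abs_sum_le_sum_abs _ _).trans_eq (by simp only [abs_mul])
    _ ≤ ∑ a : ∀ j, A j, |∏ j, σ j (a j) - ∏ j, σ' j (a j)| :=
        sum_le_sum fun a _ => mul_le_of_le_one_right (abs_nonneg _) (hu a)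
    _ ≤ dist1 σ σ' := sum_abs_prod_sub_prod_le_dist1 hσ hσ'

theorem sum_mul_expUtil_update_pureStrat [∀ i, DecidableEq (A i)] (u : N → (∀ j, A j) → ℝ)
    (i : N) (σ : ∀ j, A j → ℝ) :
    ∑ b, σ i b * expUtil u i (Function.update σ i (pureStrat b)) = expUtil u i σ := by
  simp only [expUtil, mul_sum, prod_update_apply]
  rw [sum_comm]
  refine sum_congr rfl fun a _ => ?_
  rw [Fintype.prod_eq_mul_prod_compl i]
  simp [pureStrat, ← mul_assoc]

variable [Nonempty N] [∀ i, DecidableEq (A i)] [∀ i, Nonempty (A i)]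

theorem le_nashApr (σ : ∀ j, A j → ℝ) (u : N → (∀ j, A j) → ℝ) (i : N) (b : A i) :
    expUtil u i (Function.update σ i (pureStrat b)) - expUtil u i σ ≤ nashApr σ u :=
  (le_sup' (fun b : A i => expUtil u i (Function.update σ i (pureStrat b)) - expUtil u i σ)
    (mem_univ b)).trans (le_sup' (fun i : N => univ.sup' univ_nonempty fun b : A i =>
      expUtil u i (Function.update σ i (pureStrat b)) - expUtil u i σ) (mem_univ i))

theorem nashApr_le {σ : ∀ j, A j → ℝ} {u : N → (∀ j, A j) → ℝ} {c : ℝ}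
    (h : ∀ i (b : A i), expUtil u i (Function.update σ i (pureStrat b)) - expUtil u i σ ≤ c) :
    nashApr σ u ≤ c :=
  sup'_le _ _ fun i _ => sup'_le _ _ fun b _ => h i b

/-- `u_i(σ)` is a `σ_i`-average of the payoffs `u_i(b, σ_{-i})`, so some pure deviation
gains at least nothing. -/
theorem nashApr_nonneg {σ : ∀ j, A j → ℝ} (hσ : IsMixedProfile σ) (u : N → (∀ j, A j) → ℝ) :
    0 ≤ nashApr σ u := by
  let i : N := Classical.arbitrary N
  set dev : A i → ℝ := fun b => expUtil u i (Function.update σ i (pureStrat b))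
  obtain ⟨b, -, hb⟩ := exists_mem_eq_sup' univ_nonempty dev
  have havg : expUtil u i σ ≤ dev b :=
    calc expUtil u i σ = ∑ c, σ i c * dev c := (sum_mul_expUtil_update_pureStrat u i σ).symm
      _ ≤ ∑ c, σ i c * dev b :=
          sum_le_sum fun c _ => mul_le_mul_of_nonneg_left (hb ▸ le_sup' dev (mem_univ c)) (hσ.1 i c)
      _ = dev b := by rw [← sum_mul, hσ.2 i, one_mul]
  exact (sub_nonneg.2 havg).trans (le_nashApr σ u i b)

theorem nashApr_le_one {σ : ∀ j, A j → ℝ} (hσ : IsMixedProfile σ) {u : N → (∀ j, A j) → ℝ}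
    (hu : ∀ i a, u i a ∈ Set.Icc (0 : ℝ) 1) : nashApr σ u ≤ 1 :=
  nashApr_le fun i b => by
    linarith [expUtil_le_one (fun a => (hu i a).2) (hσ.update_pureStrat b),
      expUtil_nonneg (fun a => (hu i a).1) hσ]

/-- Both terms of each deviation gain move by at most `‖σ - σ'‖₁`. -/
theorem nashApr_le_add_two_mul_dist1 {σ σ' : ∀ j, A j → ℝ} (hσ : IsMixedProfile σ)
    (hσ' : IsMixedProfile σ') {u : N → (∀ j, A j) → ℝ} (hu : ∀ i a, |u i a| ≤ 1) :
    nashApr σ u ≤ nashApr σ' u + 2 * dist1 σ σ' :=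
  nashApr_le fun i b => by
    have hdev := (abs_expUtil_sub_le_dist1 (hu i) (hσ.update_pureStrat b)
      (hσ'.update_pureStrat b)).trans (dist1_update_le σ σ' i (pureStrat b))
    have hbase := abs_expUtil_sub_le_dist1 (hu i) hσ hσ'
    rw [abs_le] at hdev hbase
    linarith [le_nashApr σ' u i b]

theorem abs_nashApr_sub_le {σ σ' : ∀ j, A j → ℝ} (hσ : IsMixedProfile σ)
    (hσ' : IsMixedProfile σ') {u : N → (∀ j, A j) → ℝ} (hu : ∀ i a, |u i a| ≤ 1) :
    |nashApr σ u - nashApr σ' u| ≤ 2 * dist1 σ σ' := by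
  have h := nashApr_le_add_two_mul_dist1 hσ hσ' hu
  have h' := nashApr_le_add_two_mul_dist1 hσ' hσ hu
  rw [dist1_comm] at h'
  exact abs_sub_le_iff.2 ⟨by linarith, by linarith⟩

end Game

section Loss

variable {N : Type*} {A : N → Type*} [Fintype N] [DecidableEq N] [Nonempty N]
  [∀ i, Fintype (A i)] [∀ i, DecidableEq (A i)] [∀ i, Nonempty (A i)]

theorem abs_nashLoss_le_one (h : NEApprox N A) (u : GameUtil N A) : |nashLoss h u| ≤ 1 := by
  rw [nashLoss, abs_of_nonneg (nashApr_nonneg (h.2 u) u.1)]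
  exact nashApr_le_one (h.2 u) u.2

theorem abs_nashLoss_sub_le (h g : NEApprox N A) (u : GameUtil N A) :
    |nashLoss h u - nashLoss g u| ≤ 2 * dist1 (h.1 u) (g.1 u) :=
  abs_nashApr_sub_le (h.2 u) (g.2 u) fun i a =>
    abs_le.2 ⟨by linarith [(u.2 i a).1], (u.2 i a).2⟩

end Loss

section Rademacher

variable {m : ℕ}

/-- Hoeffding's lemma for a Rademacher sum, via `cosh t ≤ exp (t² / 2)`. -/
theorem rademacher_mgf_le (v : Fin m → ℝ) (t : ℝ) :
    1 / (2 : ℝ) ^ m * ∑ x : Fin m → Bool, Real.exp (t * ∑ j, (if x j then 1 else -1) * v j) ≤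
      Real.exp (t ^ 2 * (∑ j, v j ^ 2) / 2) := by
  have hpair : ∀ j, ∑ b : Bool, Real.exp (t * ((if b then 1 else -1) * v j)) =
      2 * Real.cosh (t * v j) := fun j => by
    rw [Fintype.sum_bool, Real.cosh_eq]; simp; ring
  calc 1 / (2 : ℝ) ^ m * ∑ x : Fin m → Bool, Real.exp (t * ∑ j, (if x j then 1 else -1) * v j)
      = 1 / (2 : ℝ) ^ m * ∏ j, ∑ b : Bool, Real.exp (t * ((if b then 1 else -1) * v j)) := by
        simp only [Fintype.prod_sum, mul_sum, Real.exp_sum]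
    _ = ∏ j, Real.cosh (t * v j) := by
        simp only [hpair, prod_mul_distrib, prod_const, card_univ, Fintype.card_fin]
        field_simp
    _ ≤ ∏ j, Real.exp ((t * v j) ^ 2 / 2) :=
        prod_le_prod (fun j _ => (Real.cosh_pos _).le) fun j _ => Real.cosh_le_exp_half_sq _
    _ = Real.exp (t ^ 2 * (∑ j, v j ^ 2) / 2) := by
        rw [← Real.exp_sum, mul_sum, sum_div]
        simp only [mul_pow]

theorem mul_avg_sup_rademacher_sum_le {α : Type*} (C : Finset α) (hC : C.Nonempty)
    (f : α → Fin m → ℝ) (hf : ∀ g ∈ C, ∀ j, |f g j| ≤ 1) (t : ℝ) :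
    t * (1 / (2 : ℝ) ^ m * ∑ x : Fin m → Bool,
        C.sup' hC fun g => ∑ j, (if x j then 1 else -1) * f g j) ≤
      Real.log C.card + t ^ 2 * m / 2 := by
  set w : ℝ := 1 / (2 : ℝ) ^ m
  set T : α → (Fin m → Bool) → ℝ := fun g x => ∑ j, (if x j then 1 else -1) * f g j
  have hw : 0 ≤ w := by positivity
  have hw_sum : ∑ _x : Fin m → Bool, w = 1 := by simp [w]
  have hjensen : Real.exp (t * (w * ∑ x, C.sup' hC (T · x))) ≤
      w * ∑ x, Real.exp (t * C.sup' hC (T · x)) := by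
    simpa [mul_sum, smul_eq_mul, mul_left_comm] using convexOn_exp.map_sum_le
      (t := univ) (w := fun _ => w) (p := fun x => t * C.sup' hC (T · x))
      (fun _ _ => hw) hw_sum fun _ _ => Set.mem_univ _
  have hmax : ∀ x, Real.exp (t * C.sup' hC (T · x)) ≤ ∑ g ∈ C, Real.exp (t * T g x) := fun x => by
    obtain ⟨g, hg, hgx⟩ := exists_mem_eq_sup' hC (T · x)
    rw [hgx]
    exact single_le_sum (f := fun g => Real.exp (t * T g x)) (fun _ _ => (Real.exp_pos _).le) hg
  have hmgf : ∀ g ∈ C, w * ∑ x, Real.exp (t * T g x) ≤ Real.exp (t ^ 2 * m / 2) := fun g hg =>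
    (rademacher_mgf_le (f g) t).trans <| Real.exp_le_exp.2 <| by
      have hsq : ∑ j, f g j ^ 2 ≤ m := by
        simpa using sum_le_sum fun j (_ : j ∈ univ) => (sq_le_one_iff_abs_le_one _).2 (hf g hg j)
      gcongr
  have hcard : (0 : ℝ) < C.card := by exact_mod_cast hC.card_pos
  rw [← Real.exp_le_exp, Real.exp_add, Real.exp_log hcard]
  calc Real.exp (t * (w * ∑ x, C.sup' hC (T · x)))
      ≤ w * ∑ x, ∑ g ∈ C, Real.exp (t * T g x) :=
        hjensen.trans (mul_le_mul_of_nonneg_left (sum_le_sum fun x _ => hmax x) hw)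
    _ = ∑ g ∈ C, w * ∑ x, Real.exp (t * T g x) := by rw [sum_comm, mul_sum]
    _ ≤ ∑ _g ∈ C, Real.exp (t ^ 2 * m / 2) := sum_le_sum hmgf
    _ = C.card * Real.exp (t ^ 2 * m / 2) := by rw [sum_const, nsmul_eq_mul]

end Rademacher

theorem le_sqrt_two_mul_of_forall_le_div_add_half {E a : ℝ} (ha : 0 ≤ a)
    (h : ∀ t > 0, E ≤ a / t + t / 2) : E ≤ √(2 * a) := by
  rcases ha.eq_or_lt with rfl | ha
  · simpa using le_of_forall_pos_lt_add fun ε hε => by linarith [h ε hε, zero_div ε]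
  · have hs : 0 < √(2 * a) := Real.sqrt_pos.2 (by positivity)
    have hsq : √(2 * a) ^ 2 = 2 * a := Real.sq_sqrt (by positivity)
    have hdiv : a / √(2 * a) = √(2 * a) / 2 := by
      rw [div_eq_div_iff hs.ne' two_ne_zero]; nlinarith
    linarith [h _ hs]

theorem massart_finite_lemma {α : Type*} {m : ℕ} (C : Finset α) (hC : C.Nonempty)
    (f : α → Fin m → ℝ) (hf : ∀ g ∈ C, ∀ j, |f g j| ≤ 1) :
    1 / (m : ℝ) * (1 / (2 : ℝ) ^ m * ∑ x : Fin m → Bool,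
        C.sup' hC fun g => ∑ j, (if x j then 1 else -1) * f g j) ≤
      √(2 * Real.log C.card / m) := by
  rcases Nat.eq_zero_or_pos m with rfl | hm
  · simp
  rw [mul_div_assoc]
  refine le_sqrt_two_mul_of_forall_le_div_add_half
    (div_nonneg (Real.log_natCast_nonneg _) m.cast_nonneg) fun t ht => ?_
  have hmt : (0 : ℝ) < t * m := by positivity
  calc 1 / (m : ℝ) * (1 / (2 : ℝ) ^ m * ∑ x : Fin m → Bool,
        C.sup' hC fun g => ∑ j, (if x j then 1 else -1) * f g j)
      = t * (1 / (2 : ℝ) ^ m * ∑ x : Fin m → Bool,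
          C.sup' hC fun g => ∑ j, (if x j then 1 else -1) * f g j) / (t * m) := by
        field_simp
    _ ≤ (Real.log C.card + t ^ 2 * m / 2) / (t * m) :=
        div_le_div_of_nonneg_right (mul_avg_sup_rademacher_sum_le C hC f hf t) hmt.le
    _ = Real.log C.card / m / t + t / 2 := by field_simp

theorem csSup_image_le_sup'_add {α : Type*} {H : Set α} (hH : H.Nonempty) {C : Finset α}
    (hC : C.Nonempty) {F : α → ℝ} {c : ℝ} (h : ∀ x ∈ H, ∃ y ∈ C, F x ≤ F y + c) :
    sSup (F '' H) ≤ C.sup' hC F + c :=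
  csSup_le (hH.image F) <| by
    rintro _ ⟨x, hx, rfl⟩
    obtain ⟨y, hy, hxy⟩ := h x hx
    exact hxy.trans (by gcongr; exact le_sup' F hy)

theorem sum_sign_mul_le_sum_sign_mul_add {ι : Type*} [Fintype ι] (x : ι → Bool)
    {v w : ι → ℝ} {c : ℝ} (h : ∀ j, |v j - w j| ≤ c) :
    ∑ j, (if x j then 1 else -1) * v j ≤
      ∑ j, (if x j then 1 else -1) * w j + Fintype.card ι * c := by
  have hterm : ∀ j, (if x j then 1 else -1) * v j ≤ (if x j then 1 else -1) * w j + c :=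
    fun j => by have := abs_le.1 (h j); split_ifs <;> linarith
  simpa [sum_add_distrib] using sum_le_sum fun j (_ : j ∈ univ) => hterm j

theorem rademacher_complexity_bound_general
    {N : Type*} [Fintype N] [DecidableEq N] [Nonempty N]
    {A : N → Type*} [∀ i, Fintype (A i)] [∀ i, DecidableEq (A i)] [∀ i, Nonempty (A i)]
    (H : Set (NEApprox N A)) (hH : H.Nonempty)
    {m : ℕ} (hm : 1 ≤ m) (S : Fin m → GameUtil N A)
    (r : ℝ)
    (C : Finset (NEApprox N A)) (hC : C.Nonempty) (K : ℕ) (hK : C.card = K)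
    (hcover : Covers r C H) :
    radComplexity H S ≤ Real.sqrt (2 * Real.log K / m) + 2 * r := by
  have hloss : ∀ h ∈ H, ∃ g ∈ C, ∀ j, |nashLoss h (S j) - nashLoss g (S j)| ≤ 2 * r :=
    fun h hh => by
      obtain ⟨g, hg, hhg⟩ := hcover h hh
      exact ⟨g, hg, fun j => (abs_nashLoss_sub_le h g (S j)).trans (by linarith [hhg (S j)])⟩
  have hsup : ∀ x : Fin m → Bool,
      sSup ((fun h => ∑ j, (if x j then (1 : ℝ) else -1) * nashLoss h (S j)) '' H) ≤
        C.sup' hC (fun g => ∑ j, (if x j then (1 : ℝ) else -1) * nashLoss g (S j)) +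
          m * (2 * r) := fun x =>
    csSup_image_le_sup'_add hH hC fun h hh => by
      obtain ⟨g, hg, hhg⟩ := hloss h hh
      exact ⟨g, hg, by simpa using sum_sign_mul_le_sum_sign_mul_add x hhg⟩
  have hm0 : (m : ℝ) ≠ 0 := Nat.cast_ne_zero.2 (Nat.one_le_iff_ne_zero.1 hm)
  subst hK
  calc radComplexity H S
      ≤ 1 / (m : ℝ) * (1 / (2 : ℝ) ^ m * ∑ x : Fin m → Bool,
          (C.sup' hC (fun g => ∑ j, (if x j then (1 : ℝ) else -1) * nashLoss g (S j)) +
            m * (2 * r))) := by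
        unfold radComplexity
        gcongr with x
        exact hsup x
    _ = 1 / (m : ℝ) * (1 / (2 : ℝ) ^ m * ∑ x : Fin m → Bool,
          C.sup' hC (fun g => ∑ j, (if x j then (1 : ℝ) else -1) * nashLoss g (S j))) + 2 * r := by
        simp only [sum_add_distrib, sum_const, card_univ, Fintype.card_fun, Fintype.card_bool,
          Fintype.card_fin, nsmul_eq_mul, Nat.cast_pow, Nat.cast_ofNat]
        field_simp
    _ ≤ √(2 * Real.log C.card / m) + 2 * r := by
        gcongr
        exact massart_finite_lemma C hC _ fun g _ j => abs_nashLoss_le_one g (S j)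

theorem rademacher_complexity_bound
    {N : Type*} [Fintype N] [DecidableEq N] [Nonempty N]
    {A : N → Type*} [∀ i, Fintype (A i)] [∀ i, DecidableEq (A i)] [∀ i, Nonempty (A i)]
    (H : Set (NEApprox N A)) (hH : H.Nonempty)
    {m : ℕ} (hm : 1 ≤ m) (S : Fin m → GameUtil N A)
    (r : ℝ) (hr : 0 < r)
    (C : Finset (NEApprox N A)) (hC : C.Nonempty) (K : ℕ) (hK : C.card = K)
    (hcover : Covers r C H) :
    radComplexity H S ≤ Real.sqrt (2 * Real.log K / m) + 2 * r :=
  rademacher_complexity_bound_general H hH hm S r C hC K hK hcover
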